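/- (Proposition 7.3, recursive form) For every n ≥ 1, the set of symmetric 2-Brauer relations of rank 2n is finite and its cardinality equals M^s(n). -/

import Mathlib

/-!
A symmetric relation on `ZMod (2n)` is read as an involution of `ℕ` supported in `[0, 2n)` that is
noncrossing and commutes with the half-turn `x ↦ x ± n`. More generally, consider such relations on
a pair of antipodal arcs `[a, b)` and `[a + n, b + n)` and split them according to the partner of
`a`: `a` itself, its antipode `a + n`, some `c ∈ (a, b)`, or the antipode `c + n` of such a point.
Removing the chord at `a` together with its mirror image leaves independent pieces: noncrossing
involutions of an interval, counted by the Motzkin numbers, and a symmetric relation on a shorter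
pair of antipodal arcs. The four cases give the four terms of
`Ms k = Ms (k-1) + M (k-1) + ∑ M i * Ms (k-2-i) + ∑ Ms i * M (k-2-i)`.
Regluing preserves noncrossing because each piece lives in an interval avoided by the others, and
it preserves the symmetry because the half-turn conjugates the glued involution to the product of
its factors in reverse order, that is, to its inverse.
-/

/-- The Motzkin numbers: `M 0 = 1`, `M 1 = 1` and, for `n ≥ 2`,
`M n = M (n-1) + ∑_{i=0}^{n-2} M i * M (n-2-i)`. -/
def motzkin : ℕ → ℕ
  | 0 => 1
  | 1 => 1
  | n + 2 =>
      motzkin (n + 1) +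
        ∑ i ∈ (Finset.range (n + 1)).attach, motzkin i.1 * motzkin (n - i.1)
decreasing_by
  all_goals
    first
      | omega
      | (have h := Finset.mem_range.mp i.2; omega)

/-- `Ms 0 = 1`, `Ms 1 = 2` and, for `n ≥ 2`,
`Ms n = Ms (n-1) + M (n-1) + 2 * ∑_{i=0}^{n-2} M i * Ms (n-2-i)`. -/
def Ms : ℕ → ℕ
  | 0 => 1
  | 1 => 2
  | n + 2 =>
      Ms (n + 1) + motzkin (n + 1) +
        2 * ∑ i ∈ (Finset.range (n + 1)).attach, motzkin i.1 * Ms (n - i.1)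
decreasing_by
  all_goals
    first
      | omega
      | (have h := Finset.mem_range.mp i.2; omega)

/-- A symmetric `2`-Brauer relation of rank `2n`: an involution `σ` of `ZMod (2n)`
which is noncrossing and symmetric with respect to rotation by `π`,
i.e. `σ (i + n) = σ i + n` for all `i`. -/
def IsSymTwoBrauer (n : ℕ) (σ : ZMod (2 * n) → ZMod (2 * n)) : Prop :=
  Function.Involutive σ ∧
    (¬ ∃ i j : ZMod (2 * n),
        i.val < j.val ∧ j.val < (σ i).val ∧ (σ i).val < (σ j).val) ∧
    ∀ i : ZMod (2 * n), σ (i + (n : ZMod (2 * n))) = σ i + (n : ZMod (2 * n))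

open Set Function

theorem motzkin_succ (k : ℕ) :
    motzkin (k + 1) = motzkin k + ∑ i ∈ Finset.range k, motzkin i * motzkin (k - 1 - i) := by
  cases k with
  | zero => simp [motzkin]
  | succ k =>
    rw [motzkin, Finset.sum_attach (Finset.range (k + 1)) fun i => motzkin i * motzkin (k - i)]
    simp

theorem Ms_succ (k : ℕ) :
    Ms (k + 1) = Ms k + motzkin k + 2 * ∑ i ∈ Finset.range k, motzkin i * Ms (k - 1 - i) := by
  cases k with
  | zero => simp [Ms, motzkin]
  | succ k =>
    rw [Ms, Finset.sum_attach (Finset.range (k + 1)) fun i => motzkin i * Ms (k - i)]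
    simp

theorem Set.ncard_eq_sum_ncard_fiber {α β : Type*} {X : Set α} {f : α → β} {V : Finset β}
    (hX : X.Finite) (hf : MapsTo f X V) :
    X.ncard = ∑ v ∈ V, {x ∈ X | f x = v}.ncard := by
  have hXV : X = ⋃ v ∈ (V : Set β), {x ∈ X | f x = v} := by
    ext x
    simpa using fun hx => hf hx
  conv_lhs => rw [hXV]
  rw [Finite.ncard_biUnion V.finite_toSet fun v _ => hX.subset fun _ hx => hx.1,
    finsum_mem_coe_finset]
  exact fun v _ w _ hvw => disjoint_left.2 fun x hv hw => hvw (hv.2.symm.trans hw.2)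

/-! ### Noncrossing involutions -/

section restrictTo

variable {α : Type*} {T : Set α} {σ : α → α}

open Classical in
noncomputable def restrictTo (T : Set α) (σ : α → α) (x : α) : α := if x ∈ T then σ x else x

theorem restrictTo_of_mem {x : α} (hx : x ∈ T) : restrictTo T σ x = σ x := if_pos hx

theorem restrictTo_of_notMem {x : α} (hx : x ∉ T) : restrictTo T σ x = x := if_neg hx

theorem eqOn_of_restrictTo_eq {σ' : α → α} (h : restrictTo T σ = restrictTo T σ') :
    EqOn σ σ' T := fun x hx => by
  simpa only [restrictTo_of_mem hx] using congrFun h x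

theorem commute_restrictTo {ρ : α → α} (h : Function.Commute σ ρ)
    (hT : ∀ x, ρ x ∈ T ↔ x ∈ T) : Function.Commute (restrictTo T σ) ρ := fun x => by
  by_cases hx : x ∈ T
  · rw [restrictTo_of_mem hx, restrictTo_of_mem ((hT x).2 hx), h x]
  · rw [restrictTo_of_notMem hx, restrictTo_of_notMem (mt (hT x).1 hx)]

noncomputable def restrictPair (T₁ T₂ : Set α) (σ : α → α) : (α → α) × (α → α) :=
  (restrictTo T₁ σ, restrictTo T₂ σ)

end restrictTo

/-- A noncrossing partial matching on `S`: the chords are the `2`-cycles of `σ`. -/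
structure IsNCInvolution {α : Type*} [LinearOrder α] (S : Set α) (σ : α → α) : Prop where
  involutive : Involutive σ
  eq_self_of_notMem : ∀ x ∉ S, σ x = x
  noncrossing : ¬∃ i j, i < j ∧ j < σ i ∧ σ i < σ j

section LinearOrder

variable {α : Type*} [LinearOrder α] {S T I : Set α} {σ τ : α → α}

def ncInvolutions (S : Set α) : Set (α → α) := {σ | IsNCInvolution S σ}

theorem isNCInvolution_id (S : Set α) : IsNCInvolution S id :=
  ⟨fun _ => rfl, fun _ _ => rfl, fun ⟨_, _, hij, hji, _⟩ => lt_asymm hij hji⟩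

theorem isNCInvolution_swap (a c : α) : IsNCInvolution {a, c} (Equiv.swap a c) := by
  refine ⟨Equiv.swap_apply_self a c, fun x hx => ?_, ?_⟩
  · simp only [mem_insert_iff, mem_singleton_iff, not_or] at hx
    exact Equiv.swap_apply_of_ne_of_ne hx.1 hx.2
  · rintro ⟨i, j, hij, hj, hji⟩
    simp only [Equiv.swap_apply_def] at hj hji
    split_ifs at hj hji <;> subst_vars <;> order

namespace IsNCInvolution

theorem mono (h : IsNCInvolution S σ) (hST : S ⊆ T) : IsNCInvolution T σ :=
  ⟨h.involutive, fun x hx => h.eq_self_of_notMem x (fun hS => hx (hST hS)), h.noncrossing⟩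

theorem eq_id (h : IsNCInvolution ∅ σ) : σ = id :=
  funext fun x => h.eq_self_of_notMem x (notMem_empty x)

theorem ext {σ' : α → α} (h : IsNCInvolution S σ) (h' : IsNCInvolution S σ')
    (hS : EqOn σ σ' S) : σ = σ' := by
  funext x
  by_cases hx : x ∈ S
  · exact hS hx
  · rw [h.eq_self_of_notMem x hx, h'.eq_self_of_notMem x hx]

theorem mapsTo (h : IsNCInvolution S σ) : MapsTo σ S S := by
  intro x hx
  by_contra hσx
  have hfix := h.eq_self_of_notMem _ hσx
  rw [h.involutive x] at hfix
  exact hσx (hfix ▸ hx)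

theorem mapsTo_compl (h : IsNCInvolution S σ) (hT : MapsTo σ T T) : MapsTo σ Tᶜ Tᶜ :=
  fun x hx hσx => hx (h.involutive x ▸ hT hσx)

theorem mapsTo_Ioo {a c : α} (h : IsNCInvolution S σ) (hσa : σ a = c) :
    MapsTo σ (Ioo a c) (Ioo a c) := by
  rintro x ⟨hax, hxc⟩
  have hσc : σ c = a := hσa ▸ h.involutive a
  have hσx := h.involutive x
  have hxa : σ x ≠ a := fun he => by rw [he, hσa] at hσx; order
  have hxc' : σ x ≠ c := fun he => by rw [he, hσc] at hσx; order
  refine ⟨lt_of_not_ge fun hle => ?_, lt_of_not_ge fun hle => ?_⟩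
  · exact h.noncrossing ⟨σ x, a, lt_of_le_of_ne hle hxa, by rwa [hσx], by rwa [hσx, hσa]⟩
  · exact h.noncrossing ⟨a, x, hax, by rwa [hσa], lt_of_le_of_ne (hσa ▸ hle) (hσa ▸ hxc'.symm)⟩

theorem mapsTo_Icc {a c : α} (h : IsNCInvolution S σ) (hσa : σ a = c) :
    MapsTo σ (Icc a c) (Icc a c) := by
  have hσc : σ c = a := hσa ▸ h.involutive a
  rintro x ⟨hax, hxc⟩
  rcases hax.eq_or_lt with rfl | hax
  · rw [hσa]; exact ⟨hxc, le_rfl⟩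
  rcases hxc.eq_or_lt with rfl | hxc
  · rw [hσc]; exact ⟨le_rfl, hax.le⟩
  exact Ioo_subset_Icc_self (h.mapsTo_Ioo hσa ⟨hax, hxc⟩)

theorem comp_comm (hσ : IsNCInvolution S σ) (hτ : IsNCInvolution T τ) (hST : Disjoint S T) :
    σ ∘ τ = τ ∘ σ := by
  funext x
  by_cases hxS : x ∈ S
  · simp [hτ.eq_self_of_notMem x (disjoint_left.1 hST hxS),
      hτ.eq_self_of_notMem _ (disjoint_left.1 hST (hσ.mapsTo hxS))]
  by_cases hxT : x ∈ T
  · simp [hσ.eq_self_of_notMem x hxS,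
      hσ.eq_self_of_notMem _ (disjoint_right.1 hST (hτ.mapsTo hxT))]
  · simp [hσ.eq_self_of_notMem x hxS, hτ.eq_self_of_notMem x hxT]

/-- No chord of `σ` can cross a chord of `τ`, as the former lie in an interval avoided by `τ`. -/
theorem comp (hσ : IsNCInvolution S σ) (hτ : IsNCInvolution T τ) (hI : I.OrdConnected)
    (hSI : S ⊆ I) (hIT : Disjoint I T) : IsNCInvolution (S ∪ T) (σ ∘ τ) := by
  have apply_of_mem : ∀ x ∈ T, σ (τ x) = τ x := fun x hx =>
    hσ.eq_self_of_notMem _ fun hS => disjoint_left.1 hIT (hSI hS) (hτ.mapsTo hx)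
  have apply_of_notMem : ∀ x ∉ T, σ (τ x) = σ x := fun x hx => by
    rw [hτ.eq_self_of_notMem x hx]
  have notMem : ∀ x ∉ T, σ x ∉ T := fun x hx => by
    by_cases hxS : x ∈ S
    · exact disjoint_left.1 hIT (hSI (hσ.mapsTo hxS))
    · rwa [hσ.eq_self_of_notMem x hxS]
  have not_between : ∀ x ∈ S, ∀ y ∈ T, ¬(x ≤ y ∧ y ≤ σ x) := fun x hx y hy hxy =>
    disjoint_left.1 hIT (hI.out (hSI hx) (hSI (hσ.mapsTo hx)) hxy) hy
  refine ⟨fun x => ?_, fun x hx => ?_, ?_⟩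
  · by_cases hx : x ∈ T
    · simp only [comp_apply]
      rw [apply_of_mem x hx, apply_of_mem _ (hτ.mapsTo hx), hτ.involutive]
    · simp only [comp_apply]
      rw [apply_of_notMem x hx, apply_of_notMem _ (notMem x hx), hσ.involutive]
  · rw [mem_union, not_or] at hx
    simp [hτ.eq_self_of_notMem x hx.2, hσ.eq_self_of_notMem x hx.1]
  · rintro ⟨i, j, hij, hj, hji⟩
    simp only [comp_apply] at hj hji
    by_cases hiT : i ∈ T <;> by_cases hjT : j ∈ T
    · rw [apply_of_mem i hiT, apply_of_mem j hjT] at hji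
      rw [apply_of_mem i hiT] at hj
      exact hτ.noncrossing ⟨i, j, hij, hj, hji⟩
    · rw [apply_of_mem i hiT, apply_of_notMem j hjT] at hji
      rw [apply_of_mem i hiT] at hj
      have hjS : j ∈ S := by_contra fun hjS => by
        rw [hσ.eq_self_of_notMem j hjS] at hji; exact lt_asymm hj hji
      exact not_between j hjS _ (hτ.mapsTo hiT) ⟨hj.le, hji.le⟩
    · rw [apply_of_notMem i hiT] at hj
      have hiS : i ∈ S := by_contra fun hiS => by
        rw [hσ.eq_self_of_notMem i hiS] at hj; exact lt_asymm hij hj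
      exact not_between i hiS j hjT ⟨hij.le, hj.le⟩
    · rw [apply_of_notMem i hiT, apply_of_notMem j hjT] at hji
      rw [apply_of_notMem i hiT] at hj
      exact hσ.noncrossing ⟨i, j, hij, hj, hji⟩

theorem comp' (hσ : IsNCInvolution S σ) (hτ : IsNCInvolution T τ) (hI : I.OrdConnected)
    (hTI : T ⊆ I) (hIS : Disjoint I S) : IsNCInvolution (S ∪ T) (σ ∘ τ) := by
  rw [hσ.comp_comm hτ (hIS.mono_left hTI).symm, union_comm]
  exact hτ.comp hσ hI hTI hIS

end IsNCInvolution

theorem ncInvolutions_empty : ncInvolutions (∅ : Set α) = {id} :=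
  eq_singleton_iff_unique_mem.2 ⟨isNCInvolution_id ∅, fun _ hσ => IsNCInvolution.eq_id hσ⟩

theorem IsNCInvolution.restrictTo (h : IsNCInvolution S σ) (hT : MapsTo σ T T) :
    IsNCInvolution (S ∩ T) (restrictTo T σ) := by
  refine ⟨fun x => ?_, fun x hx => ?_, ?_⟩
  · by_cases hx : x ∈ T
    · rw [restrictTo_of_mem hx, restrictTo_of_mem (hT hx), h.involutive]
    · rw [restrictTo_of_notMem hx, restrictTo_of_notMem hx]
  · by_cases hxT : x ∈ T
    · rw [restrictTo_of_mem hxT, h.eq_self_of_notMem x fun hxS => hx ⟨hxS, hxT⟩]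
    · exact restrictTo_of_notMem hxT
  · rintro ⟨i, j, hij, hj, hji⟩
    by_cases hi : i ∈ T
    · by_cases hjT : j ∈ T
      · rw [restrictTo_of_mem hi] at hj hji
        rw [restrictTo_of_mem hjT] at hji
        exact h.noncrossing ⟨i, j, hij, hj, hji⟩
      · rw [restrictTo_of_notMem hjT] at hji
        exact lt_asymm hj hji
    · rw [restrictTo_of_notMem hi] at hj
      exact lt_asymm hij hj

theorem Set.Finite.ncInvolutions (hS : S.Finite) : (ncInvolutions S).Finite := by
  have : Finite S := hS.to_subtype
  refine Finite.of_finite_image (f := S.domRestrict)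
    ((Finite.pi (t := fun _ : S => S) fun _ => hS).subset ?_) ?_
  · rintro _ ⟨σ, hσ, rfl⟩ x -
    exact IsNCInvolution.mapsTo hσ x.2
  · exact fun σ hσ σ' hσ' h => IsNCInvolution.ext hσ hσ' fun x hx => congrFun h ⟨x, hx⟩

theorem restrictTo_comp_comp (h : IsNCInvolution T σ) {f g : α → α} (hf : ∀ x ∈ T, f x = x)
    (hg : ∀ x ∈ T, g x = x) : restrictTo T (f ∘ σ ∘ g) = σ := by
  funext x
  by_cases hx : x ∈ T
  · simp only [restrictTo_of_mem hx, comp_apply, hg x hx, hf _ (h.mapsTo hx)]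
  · rw [restrictTo_of_notMem hx, h.eq_self_of_notMem x hx]

end LinearOrder

/-! ### The half-turn -/

def shift (n : ℕ) (τ : ℕ → ℕ) (x : ℕ) : ℕ := if n ≤ x then τ (x - n) + n else x

theorem shift_of_lt {n x : ℕ} (τ : ℕ → ℕ) (hx : x < n) : shift n τ x = x :=
  if_neg (not_le.2 hx)

theorem shift_add (n : ℕ) (τ : ℕ → ℕ) (x : ℕ) : shift n τ (x + n) = τ x + n := by
  simp [shift]

theorem isNCInvolution_shift {S : Set ℕ} {τ : ℕ → ℕ} (h : IsNCInvolution S τ) (n : ℕ) :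
    IsNCInvolution ((· + n) '' S) (shift n τ) := by
  have shift_of_le : ∀ x, n ≤ x → shift n τ x = τ (x - n) + n := fun x hx => if_pos hx
  refine ⟨fun x => ?_, fun x hx => ?_, ?_⟩
  · rcases lt_or_ge x n with hx | hx
    · rw [shift_of_lt τ hx, shift_of_lt τ hx]
    · rw [shift_of_le x hx, shift_add, h.involutive, Nat.sub_add_cancel hx]
  · rcases lt_or_ge x n with hxn | hxn
    · exact shift_of_lt τ hxn
    · rw [shift_of_le x hxn, h.eq_self_of_notMem _ fun hS => hx ⟨x - n, hS, by simp [hxn]⟩,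
        Nat.sub_add_cancel hxn]
  · rintro ⟨i, j, hij, hj, hji⟩
    rcases lt_or_ge i n with hin | hin
    · rw [shift_of_lt τ hin] at hj; omega
    rw [shift_of_le i hin] at hj hji
    rw [shift_of_le j (by omega)] at hji
    exact h.noncrossing ⟨i - n, j - n, by omega, by omega, by omega⟩

/-- Rotation by `π` of the `2n` points `0, …, 2n - 1` placed around a circle. -/
def halfTurn (n x : ℕ) : ℕ := if x < n then x + n else if x < 2 * n then x - n else x

theorem involutive_halfTurn (n : ℕ) : Involutive (halfTurn n) := fun x => by
  unfold halfTurn; split_ifs <;> omega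

section halfTurn

variable {S : Set ℕ} {n : ℕ} {τ : ℕ → ℕ}

theorem halfTurn_of_lt {x : ℕ} (hx : x < n) : halfTurn n x = x + n := if_pos hx

theorem halfTurn_of_le {x : ℕ} (hx : 2 * n ≤ x) : halfTurn n x = x := by
  unfold halfTurn; split_ifs <;> omega

theorem halfTurn_add_of_lt {x : ℕ} (hx : x < n) : halfTurn n (x + n) = x := by
  unfold halfTurn; split_ifs <;> omega

theorem IsNCInvolution.apply_lt_of_lt (h : IsNCInvolution S τ) (hS : ∀ x ∈ S, x < n) {x : ℕ}
    (hx : x < n) : τ x < n := by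
  by_cases hxS : x ∈ S
  · exact hS _ (h.mapsTo hxS)
  · rwa [h.eq_self_of_notMem x hxS]

theorem IsNCInvolution.semiconj_halfTurn_shift (h : IsNCInvolution S τ)
    (hS : ∀ x ∈ S, x < n) : Semiconj (halfTurn n) τ (shift n τ) := by
  have hfix : ∀ x, n ≤ x → τ x = x := fun x hx => h.eq_self_of_notMem x fun hxS => by
    have := hS x hxS; omega
  intro x
  rcases lt_or_ge x n with hx | hx
  · rw [halfTurn_of_lt (h.apply_lt_of_lt hS hx), halfTurn_of_lt hx, shift_add]
  · rw [hfix x hx]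
    unfold halfTurn shift
    split_ifs <;> first | omega | (rw [hfix] <;> omega)

theorem IsNCInvolution.semiconj_halfTurn_shift' (h : IsNCInvolution S τ)
    (hS : ∀ x ∈ S, x < n) : Semiconj (halfTurn n) (shift n τ) τ :=
  (h.semiconj_halfTurn_shift hS).inverse_left (involutive_halfTurn n) (involutive_halfTurn n)

end halfTurn

theorem semiconj_halfTurn_swap (n u v : ℕ) :
    Semiconj (halfTurn n) (Equiv.swap u v) (Equiv.swap (halfTurn n u) (halfTurn n v)) :=
  fun x => ((involutive_halfTurn n).injective.swap_apply u v x).symm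

/-- Conjugating a symmetric gluing `g = p₁ ∘ ⋯ ∘ pₖ` of involutions by the half-turn gives
`r = pₖ ∘ ⋯ ∘ p₁`, which is an inverse of `g`. -/
theorem Function.Involutive.commute_of_semiconj {α : Type*} {g r ρ : α → α} (hg : Involutive g)
    (hgr : Semiconj ρ g r) (hr : LeftInverse r g) : Function.Commute g ρ := by
  obtain rfl : r = g := hr.eq_rightInverse hg
  exact fun x => (hgr x).symm

/-! ### Linear count -/

section ncInvolutions

variable {a b c : ℕ}

theorem ncInvolutions_fiber_self (a b : ℕ) :
    {σ ∈ ncInvolutions (Ico a b) | σ a = a} = ncInvolutions (Ico (a + 1) b) := by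
  ext σ
  refine ⟨fun ⟨hσ, hσa⟩ => ⟨hσ.involutive, fun x hx => ?_, hσ.noncrossing⟩, fun hσ => ?_⟩
  · rcases eq_or_ne x a with rfl | hxa
    · exact hσa
    · exact hσ.eq_self_of_notMem x (by grind)
  · exact ⟨hσ.mono (by grind), hσ.eq_self_of_notMem a (by simp)⟩

theorem mapsTo_restrictPair_ncInvolutions_fiber (hac : a < c) :
    MapsTo (restrictPair (Ico (a + 1) c) (Ico (c + 1) b)) {σ ∈ ncInvolutions (Ico a b) | σ a = c}
      (ncInvolutions (Ico (a + 1) c) ×ˢ ncInvolutions (Ico (c + 1) b)) := by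
  rintro σ ⟨hσ, hσa⟩
  have inner : MapsTo σ (Ico (a + 1) c) (Ico (a + 1) c) :=
    Ico_add_one_left_eq_Ioo a c ▸ hσ.mapsTo_Ioo hσa
  have outer : MapsTo σ (Ico (c + 1) b) (Ico (c + 1) b) := by
    convert hσ.mapsTo.inter_inter (hσ.mapsTo_compl (hσ.mapsTo_Icc hσa)) using 1 <;> ext <;> grind
  exact ⟨(hσ.restrictTo inner).mono inter_subset_right,
    (hσ.restrictTo outer).mono inter_subset_right⟩

theorem surjOn_restrictPair_ncInvolutions_fiber (hac : a < c) (hcb : c < b) :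
    SurjOn (restrictPair (Ico (a + 1) c) (Ico (c + 1) b)) {σ ∈ ncInvolutions (Ico a b) | σ a = c}
      (ncInvolutions (Ico (a + 1) c) ×ˢ ncInvolutions (Ico (c + 1) b)) := by
  rintro ⟨τ₁, τ₂⟩ ⟨hτ₁ : IsNCInvolution _ τ₁, hτ₂ : IsNCInvolution _ τ₂⟩
  have chord : IsNCInvolution (Ico (a + 1) c ∪ {a, c}) (τ₁ ∘ Equiv.swap a c) :=
    hτ₁.comp (isNCInvolution_swap a c) ordConnected_Ico subset_rfl (by simp)
  refine ⟨τ₁ ∘ Equiv.swap a c ∘ τ₂, ⟨?_, ?_⟩, Prod.ext ?_ ?_⟩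
  · exact (chord.comp hτ₂ (ordConnected_Icc (a := a) (b := c)) (by grind) (by grind)).mono
      (by grind)
  · simp [hτ₂.eq_self_of_notMem a (by grind), hτ₁.eq_self_of_notMem c (by grind)]
  · exact restrictTo_comp_comp hτ₁ (f := id) (fun _ _ => rfl) fun x hx => by
      simp [hτ₂.eq_self_of_notMem x (by grind),
        Equiv.swap_apply_of_ne_of_ne (by grind : x ≠ a) (by grind : x ≠ c)]
  · exact restrictTo_comp_comp hτ₂ (f := τ₁ ∘ Equiv.swap a c) (g := id)
      (fun x hx => by simp [hτ₁.eq_self_of_notMem x (by grind),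
        Equiv.swap_apply_of_ne_of_ne (by grind : x ≠ a) (by grind : x ≠ c)])
      fun _ _ => rfl

theorem ncard_ncInvolutions_fiber (hac : a < c) (hcb : c < b) :
    {σ ∈ ncInvolutions (Ico a b) | σ a = c}.ncard =
      (ncInvolutions (Ico (a + 1) c)).ncard * (ncInvolutions (Ico (c + 1) b)).ncard := by
  rw [← ncard_prod]
  refine BijOn.ncard_eq ⟨mapsTo_restrictPair_ncInvolutions_fiber hac, ?_,
    surjOn_restrictPair_ncInvolutions_fiber hac hcb⟩
  rintro σ ⟨hσ, hσa⟩ σ' ⟨hσ', hσ'a⟩ heq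
  simp only [restrictPair, Prod.mk.injEq] at heq
  have hσc : σ c = a := hσa ▸ hσ.involutive a
  have hσ'c : σ' c = a := hσ'a ▸ hσ'.involutive a
  refine hσ.ext hσ' fun x hx => ?_
  rcases eq_or_ne x a with rfl | hxa
  · rw [hσa, hσ'a]
  rcases eq_or_ne x c with rfl | hxc
  · rw [hσc, hσ'c]
  rcases lt_or_gt_of_ne hxc with hx' | hx'
  · exact eqOn_of_restrictTo_eq heq.1 (by grind)
  · exact eqOn_of_restrictTo_eq heq.2 (by grind)

end ncInvolutions

theorem ncard_ncInvolutions_Ico (a k : ℕ) :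
    (ncInvolutions (Ico a (a + k))).ncard = motzkin k := by
  induction k using Nat.strong_induction_on generalizing a with
  | _ k ih =>
  cases k with
  | zero => simp [ncInvolutions_empty, motzkin]
  | succ k =>
    have ncard_fiber_self :
        {σ ∈ ncInvolutions (Ico a (a + (k + 1))) | σ a = a + 0}.ncard = motzkin k := by
      rw [add_zero, ncInvolutions_fiber_self, ← ih k (by omega) (a + 1)]
      ring_nf
    have ncard_fiber_chord : ∀ i < k,
        {σ ∈ ncInvolutions (Ico a (a + (k + 1))) | σ a = a + (i + 1)}.ncard =
          motzkin i * motzkin (k - 1 - i) := by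
      intro i hi
      rw [ncard_ncInvolutions_fiber (by omega) (by omega),
        show a + (k + 1) = a + (i + 1) + 1 + (k - 1 - i) by omega, ih (k - 1 - i) (by omega),
        show a + (i + 1) = a + 1 + i by ring, ih i (by omega)]
    rw [ncard_eq_sum_ncard_fiber (f := fun σ => σ a) (V := Finset.Ico a (a + (k + 1)))
      (finite_Ico _ _).ncInvolutions fun σ hσ => by
        simpa using IsNCInvolution.mapsTo hσ (left_mem_Ico.2 (by omega)),
      Finset.sum_Ico_eq_sum_range, Nat.add_sub_cancel_left, Finset.sum_range_succ',
      Finset.sum_congr rfl fun i hi => ncard_fiber_chord i (Finset.mem_range.1 hi),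
      ncard_fiber_self, motzkin_succ, add_comm]

/-! ### Symmetric count -/

def symNCInvolutions (a b n : ℕ) : Set (ℕ → ℕ) :=
  {σ | IsNCInvolution (Ico a b ∪ Ico (a + n) (b + n)) σ ∧ Function.Commute σ (halfTurn n)}

theorem symNCInvolutions_self (a n : ℕ) : symNCInvolutions a a n = {id} := by
  refine eq_singleton_iff_unique_mem.2 ⟨⟨isNCInvolution_id _, fun _ => rfl⟩, fun σ hσ => ?_⟩
  exact IsNCInvolution.eq_id (by simpa using hσ.1)

section symNCInvolutions

variable {a b c n : ℕ}

theorem eq_of_eqOn_of_mem_symNCInvolutions (hbn : b ≤ n) {σ σ' : ℕ → ℕ}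
    (hσ : σ ∈ symNCInvolutions a b n) (hσ' : σ' ∈ symNCInvolutions a b n)
    (h : EqOn σ σ' (Ico a b)) : σ = σ' := by
  refine hσ.1.ext hσ'.1 fun x hx => ?_
  rcases hx with hx | hx
  · exact h hx
  · obtain ⟨y, rfl⟩ : ∃ y, x = y + n := ⟨x - n, by grind⟩
    rw [← halfTurn_of_lt (by grind : y < n), hσ.2 y, hσ'.2 y, h (by grind)]

theorem symNCInvolutions_fiber_self (hab : a < b) (hbn : b ≤ n) :
    {σ ∈ symNCInvolutions a b n | σ a = a} = symNCInvolutions (a + 1) b n := by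
  ext σ
  refine ⟨fun ⟨⟨hσ, hσρ⟩, hσa⟩ => ⟨⟨hσ.involutive, fun x hx => ?_, hσ.noncrossing⟩, hσρ⟩,
    fun ⟨hσ, hσρ⟩ => ⟨⟨hσ.mono (by grind), hσρ⟩, hσ.eq_self_of_notMem a (by grind)⟩⟩
  rcases eq_or_ne x a with rfl | hxa
  · exact hσa
  rcases eq_or_ne x (a + n) with rfl | hxan
  · rw [← halfTurn_of_lt (by omega), hσρ, hσa]
  exact hσ.eq_self_of_notMem x (by grind)

theorem surjOn_restrictTo_symNCInvolutions_fiber_diameter (hab : a < b) (hbn : b ≤ n) :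
    SurjOn (restrictTo (Ico (a + 1) b)) {σ ∈ symNCInvolutions a b n | σ a = a + n}
      (ncInvolutions (Ico (a + 1) b)) := by
  intro τ (hτ : IsNCInvolution _ τ)
  have hτn : ∀ x ∈ Ico (a + 1) b, x < n := by grind
  have hshift : IsNCInvolution (Ico (a + 1 + n) (b + n)) (shift n τ) := by
    simpa [image_add_const_Ico] using isNCInvolution_shift hτ n
  have hnc : IsNCInvolution (Ico a b ∪ Ico (a + n) (b + n))
      (τ ∘ Equiv.swap a (a + n) ∘ shift n τ) := by
    have diameter := hτ.comp (isNCInvolution_swap a (a + n)) ordConnected_Ico subset_rfl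
      (by grind)
    exact (diameter.comp hshift (ordConnected_Icc (a := a) (b := a + n)) (by grind)
      (by grind)).mono (by grind)
  have hsemi := (hτ.semiconj_halfTurn_shift hτn).comp_right
    ((semiconj_halfTurn_swap n a (a + n)).comp_right (hτ.semiconj_halfTurn_shift' hτn))
  rw [halfTurn_of_lt (by grind), halfTurn_add_of_lt (by grind), Equiv.swap_comm (a + n) a]
    at hsemi
  refine ⟨_, ⟨⟨hnc, hnc.involutive.commute_of_semiconj hsemi fun x => ?_⟩, ?_⟩, ?_⟩
  · simp [hτ.involutive _, hshift.involutive _]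
  · simp [shift_of_lt τ (by grind : a < n), hτ.eq_self_of_notMem (a + n) (by grind)]
  · exact restrictTo_comp_comp hτ (f := id) (fun _ _ => rfl) fun x hx => by
      simp [shift_of_lt τ (hτn x hx), Equiv.swap_apply_of_ne_of_ne (by grind : x ≠ a)
        (by grind : x ≠ a + n)]

theorem ncard_symNCInvolutions_fiber_diameter (hab : a < b) (hbn : b ≤ n) :
    {σ ∈ symNCInvolutions a b n | σ a = a + n}.ncard = (ncInvolutions (Ico (a + 1) b)).ncard := by
  refine BijOn.ncard_eq ⟨?_, ?_, surjOn_restrictTo_symNCInvolutions_fiber_diameter hab hbn⟩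
  · rintro σ ⟨⟨hσ, -⟩, hσa⟩
    have inner : MapsTo σ (Ico (a + 1) b) (Ico (a + 1) b) := by
      convert hσ.mapsTo.inter_inter (hσ.mapsTo_Ioo hσa) using 1 <;> ext <;> grind
    exact (hσ.restrictTo inner).mono inter_subset_right
  · rintro σ ⟨hσ, hσa⟩ σ' ⟨hσ', hσ'a⟩ heq
    refine eq_of_eqOn_of_mem_symNCInvolutions hbn hσ hσ' fun x hx => ?_
    rcases eq_or_ne x a with rfl | hxa
    · rw [hσa, hσ'a]
    · exact eqOn_of_restrictTo_eq heq (by grind)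

theorem mapsTo_restrictPair_symNCInvolutions_fiber_low (hac : a < c) (hcb : c < b)
    (hbn : b ≤ n) :
    MapsTo (restrictPair (Ico (a + 1) c) (Ico (c + 1) b ∪ Ico (c + 1 + n) (b + n)))
      {σ ∈ symNCInvolutions a b n | σ a = c}
      (ncInvolutions (Ico (a + 1) c) ×ˢ symNCInvolutions (c + 1) b n) := by
  rintro σ ⟨⟨hσ, hσρ⟩, hσa⟩
  have hσan : σ (a + n) = c + n := by
    rw [← halfTurn_of_lt (by grind), hσρ, hσa, halfTurn_of_lt (by grind)]
  have inner : MapsTo σ (Ico (a + 1) c) (Ico (a + 1) c) :=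
    Ico_add_one_left_eq_Ioo a c ▸ hσ.mapsTo_Ioo hσa
  have outer : MapsTo σ (Ico (c + 1) b ∪ Ico (c + 1 + n) (b + n))
      (Ico (c + 1) b ∪ Ico (c + 1 + n) (b + n)) := by
    convert hσ.mapsTo.inter_inter (hσ.mapsTo_compl ((hσ.mapsTo_Icc hσa).union_union
      (hσ.mapsTo_Icc hσan))) using 1 <;> ext <;> grind
  refine ⟨(hσ.restrictTo inner).mono inter_subset_right,
    (hσ.restrictTo outer).mono (by grind), commute_restrictTo hσρ fun x => ?_⟩
  unfold halfTurn; split_ifs <;> grind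

theorem surjOn_restrictPair_symNCInvolutions_fiber_low (hac : a < c) (hcb : c < b)
    (hbn : b ≤ n) :
    SurjOn (restrictPair (Ico (a + 1) c) (Ico (c + 1) b ∪ Ico (c + 1 + n) (b + n)))
      {σ ∈ symNCInvolutions a b n | σ a = c}
      (ncInvolutions (Ico (a + 1) c) ×ˢ symNCInvolutions (c + 1) b n) := by
  rintro ⟨τ₁, τ⟩ ⟨hτ₁ : IsNCInvolution _ τ₁, hτ : IsNCInvolution _ τ, hτρ : Function.Commute τ _⟩
  have hL : IsNCInvolution (Icc a c) (τ₁ ∘ Equiv.swap a c) :=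
    (hτ₁.comp (isNCInvolution_swap a c) ordConnected_Ico subset_rfl (by grind)).mono (by grind)
  have hLn : ∀ x ∈ Icc a c, x < n := by grind
  have hshift : IsNCInvolution (Icc (a + n) (c + n)) (shift n (τ₁ ∘ Equiv.swap a c)) := by
    simpa [image_add_const_Icc] using isNCInvolution_shift hL n
  have hnc : IsNCInvolution (Ico a b ∪ Ico (a + n) (b + n))
      (τ₁ ∘ Equiv.swap a c ∘ τ ∘ shift n (τ₁ ∘ Equiv.swap a c)) :=
    (hL.comp (hτ.comp' hshift ordConnected_Icc subset_rfl (by grind)) ordConnected_Icc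
      subset_rfl (by grind)).mono (by grind)
  have hsemi := (hL.semiconj_halfTurn_shift hLn).comp_right
    (Semiconj.comp_right hτρ.symm (hL.semiconj_halfTurn_shift' hLn))
  refine ⟨_, ⟨⟨hnc, hnc.involutive.commute_of_semiconj hsemi fun x => ?_⟩, ?_⟩, Prod.ext ?_ ?_⟩
  · have hL' : ∀ y, τ₁ (Equiv.swap a c (τ₁ (Equiv.swap a c y))) = y := hL.involutive
    simp only [comp_apply]
    rw [hL', hτ.involutive, hshift.involutive]
  · simp [shift_of_lt _ (by grind : a < n), hτ.eq_self_of_notMem a (by grind),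
      hτ₁.eq_self_of_notMem c (by grind)]
  · exact restrictTo_comp_comp hτ₁ (f := id) (fun _ _ => rfl) fun x hx => by
      simp [shift_of_lt _ (by grind : x < n), hτ.eq_self_of_notMem x (by grind),
        Equiv.swap_apply_of_ne_of_ne (by grind : x ≠ a) (by grind : x ≠ c)]
  · exact restrictTo_comp_comp hτ (f := τ₁ ∘ Equiv.swap a c)
      (fun x hx => hL.eq_self_of_notMem x (by grind))
      fun x hx => hshift.eq_self_of_notMem x (by grind)

theorem ncard_symNCInvolutions_fiber_low (hac : a < c) (hcb : c < b) (hbn : b ≤ n) :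
    {σ ∈ symNCInvolutions a b n | σ a = c}.ncard =
      (ncInvolutions (Ico (a + 1) c)).ncard * (symNCInvolutions (c + 1) b n).ncard := by
  rw [← ncard_prod]
  refine BijOn.ncard_eq ⟨mapsTo_restrictPair_symNCInvolutions_fiber_low hac hcb hbn, ?_,
    surjOn_restrictPair_symNCInvolutions_fiber_low hac hcb hbn⟩
  rintro σ ⟨hσ, hσa⟩ σ' ⟨hσ', hσ'a⟩ heq
  simp only [restrictPair, Prod.mk.injEq] at heq
  have hσc : σ c = a := hσa ▸ hσ.1.involutive a
  have hσ'c : σ' c = a := hσ'a ▸ hσ'.1.involutive a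
  refine eq_of_eqOn_of_mem_symNCInvolutions hbn hσ hσ' fun x hx => ?_
  rcases eq_or_ne x a with rfl | hxa
  · rw [hσa, hσ'a]
  rcases eq_or_ne x c with rfl | hxc
  · rw [hσc, hσ'c]
  rcases lt_or_gt_of_ne hxc with hx' | hx'
  · exact eqOn_of_restrictTo_eq heq.1 (by grind)
  · exact eqOn_of_restrictTo_eq heq.2 (by grind)

theorem mapsTo_restrictPair_symNCInvolutions_fiber_high (hac : a < c) (hcb : c < b)
    (hbn : b ≤ n) :
    MapsTo (restrictPair (Ico (a + 1) c ∪ Ico (a + 1 + n) (c + n)) (Ico (c + 1) b))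
      {σ ∈ symNCInvolutions a b n | σ a = c + n}
      (symNCInvolutions (a + 1) c n ×ˢ ncInvolutions (Ico (c + 1) b)) := by
  rintro σ ⟨⟨hσ, hσρ⟩, hσa⟩
  have hσan : σ (a + n) = c := by
    rw [← halfTurn_of_lt (by grind), hσρ, hσa, halfTurn_add_of_lt (by grind)]
  have hσc : σ c = a + n := hσan ▸ hσ.involutive (a + n)
  have inner : MapsTo σ (Ico (a + 1) c ∪ Ico (a + 1 + n) (c + n))
      (Ico (a + 1) c ∪ Ico (a + 1 + n) (c + n)) := by
    convert (hσ.mapsTo.inter_inter (hσ.mapsTo_Ioo hσa)).inter_inter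
      (hσ.mapsTo_compl (hσ.mapsTo_Icc hσc)) using 1 <;> ext <;> grind
  have outer : MapsTo σ (Ico (c + 1) b) (Ico (c + 1) b) := by
    convert hσ.mapsTo.inter_inter (hσ.mapsTo_Ioo hσc) using 1 <;> ext <;> grind
  refine ⟨⟨(hσ.restrictTo inner).mono (by grind), commute_restrictTo hσρ fun x => ?_⟩,
    (hσ.restrictTo outer).mono inter_subset_right⟩
  unfold halfTurn; split_ifs <;> grind

theorem surjOn_restrictPair_symNCInvolutions_fiber_high (hac : a < c) (hcb : c < b)
    (hbn : b ≤ n) :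
    SurjOn (restrictPair (Ico (a + 1) c ∪ Ico (a + 1 + n) (c + n)) (Ico (c + 1) b))
      {σ ∈ symNCInvolutions a b n | σ a = c + n}
      (symNCInvolutions (a + 1) c n ×ˢ ncInvolutions (Ico (c + 1) b)) := by
  rintro ⟨τ, τ₂⟩ ⟨⟨hτ : IsNCInvolution _ τ, hτρ : Function.Commute τ _⟩,
    hτ₂ : IsNCInvolution _ τ₂⟩
  have hτ₂n : ∀ x ∈ Ico (c + 1) b, x < n := by grind
  have hshift : IsNCInvolution (Ico (c + 1 + n) (b + n)) (shift n τ₂) := by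
    simpa [image_add_const_Ico] using isNCInvolution_shift hτ₂ n
  have hnc : IsNCInvolution (Ico a b ∪ Ico (a + n) (b + n))
      (τ₂ ∘ Equiv.swap c (a + n) ∘ τ ∘ Equiv.swap a (c + n) ∘ shift n τ₂) := by
    have p₁ := hτ₂.comp (isNCInvolution_swap c (a + n)) ordConnected_Ico subset_rfl (by grind)
    have p₂ := p₁.comp hτ (ordConnected_Icc (a := c) (b := a + n)) (by grind) (by grind)
    have p₃ := p₂.comp (isNCInvolution_swap a (c + n)) (ordConnected_Ioo (a := a) (b := c + n))
      (by grind) (by grind)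
    exact (p₃.comp hshift (ordConnected_Icc (a := a) (b := c + n)) (by grind)
      (by grind)).mono (by grind)
  have hsemi := (hτ₂.semiconj_halfTurn_shift hτ₂n).comp_right
    ((semiconj_halfTurn_swap n c (a + n)).comp_right (Semiconj.comp_right hτρ.symm
    ((semiconj_halfTurn_swap n a (c + n)).comp_right (hτ₂.semiconj_halfTurn_shift' hτ₂n))))
  rw [halfTurn_of_lt (by grind : a < n), halfTurn_of_lt (by grind : c < n),
    halfTurn_add_of_lt (by grind : a < n), halfTurn_add_of_lt (by grind : c < n),
    Equiv.swap_comm (c + n) a, Equiv.swap_comm (a + n) c] at hsemi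
  refine ⟨_, ⟨⟨hnc, hnc.involutive.commute_of_semiconj hsemi fun x => ?_⟩, ?_⟩, Prod.ext ?_ ?_⟩
  · simp [hτ.involutive _, hτ₂.involutive _, hshift.involutive _]
  · simp [shift_of_lt _ (by grind : a < n), hτ.eq_self_of_notMem (c + n) (by grind),
      Equiv.swap_apply_of_ne_of_ne (by grind : c + n ≠ c) (by grind : c + n ≠ a + n),
      hτ₂.eq_self_of_notMem (c + n) (by grind)]
  · exact restrictTo_comp_comp hτ (f := τ₂ ∘ Equiv.swap c (a + n))
      (g := Equiv.swap a (c + n) ∘ shift n τ₂)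
      (fun x hx => by
        simp [Equiv.swap_apply_of_ne_of_ne (by grind : x ≠ c) (by grind : x ≠ a + n),
          hτ₂.eq_self_of_notMem x (by grind)])
      fun x hx => by
        simp [hshift.eq_self_of_notMem x (by grind),
          Equiv.swap_apply_of_ne_of_ne (by grind : x ≠ a) (by grind : x ≠ c + n)]
  · exact restrictTo_comp_comp hτ₂ (f := id) (fun _ _ => rfl) fun x hx => by
      simp [shift_of_lt _ (hτ₂n x hx), hτ.eq_self_of_notMem x (by grind),
        Equiv.swap_apply_of_ne_of_ne (by grind : x ≠ a) (by grind : x ≠ c + n),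
        Equiv.swap_apply_of_ne_of_ne (by grind : x ≠ c) (by grind : x ≠ a + n)]

theorem ncard_symNCInvolutions_fiber_high (hac : a < c) (hcb : c < b) (hbn : b ≤ n) :
    {σ ∈ symNCInvolutions a b n | σ a = c + n}.ncard =
      (symNCInvolutions (a + 1) c n).ncard * (ncInvolutions (Ico (c + 1) b)).ncard := by
  rw [← ncard_prod]
  refine BijOn.ncard_eq ⟨mapsTo_restrictPair_symNCInvolutions_fiber_high hac hcb hbn, ?_,
    surjOn_restrictPair_symNCInvolutions_fiber_high hac hcb hbn⟩
  have partner_c : ∀ σ ∈ symNCInvolutions a b n, σ a = c + n → σ c = a + n := fun σ hσ hσa => by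
    rw [← hσ.1.involutive (a + n), ← halfTurn_of_lt (by grind), hσ.2, hσa,
      halfTurn_add_of_lt (by grind)]
  rintro σ ⟨hσ, hσa⟩ σ' ⟨hσ', hσ'a⟩ heq
  simp only [restrictPair, Prod.mk.injEq] at heq
  refine eq_of_eqOn_of_mem_symNCInvolutions hbn hσ hσ' fun x hx => ?_
  rcases eq_or_ne x a with rfl | hxa
  · rw [hσa, hσ'a]
  rcases eq_or_ne x c with rfl | hxc
  · rw [partner_c σ hσ hσa, partner_c σ' hσ' hσ'a]
  rcases lt_or_gt_of_ne hxc with hx' | hx'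
  · exact eqOn_of_restrictTo_eq heq.1 (by grind)
  · exact eqOn_of_restrictTo_eq heq.2 (by grind)

end symNCInvolutions

theorem sum_range_Ms_mul_motzkin (k : ℕ) :
    ∑ i ∈ Finset.range k, Ms i * motzkin (k - 1 - i) =
      ∑ i ∈ Finset.range k, motzkin i * Ms (k - 1 - i) := by
  rw [← Finset.sum_range_reflect]
  exact Finset.sum_congr rfl fun i hi => by
    rw [mul_comm, Nat.sub_sub_self (by simp at hi; omega)]

theorem ncard_symNCInvolutions_eq_sum_fibers {a k n : ℕ} (hkn : a + (k + 1) ≤ n) :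
    (symNCInvolutions a (a + (k + 1)) n).ncard =
      ∑ i ∈ Finset.range (k + 1), {σ ∈ symNCInvolutions a (a + (k + 1)) n | σ a = a + i}.ncard +
      ∑ i ∈ Finset.range (k + 1),
        {σ ∈ symNCInvolutions a (a + (k + 1)) n | σ a = a + n + i}.ncard := by
  have hV : MapsTo (fun σ => σ a) (symNCInvolutions a (a + (k + 1)) n)
      ↑(Finset.Ico a (a + (k + 1)) ∪ Finset.Ico (a + n) (a + (k + 1) + n)) := fun σ hσ => by
    have := hσ.1.mapsTo (Or.inl (left_mem_Ico.2 (by omega)))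
    simp only [Finset.coe_union, Finset.coe_Ico]
    grind
  rw [ncard_eq_sum_ncard_fiber (((finite_Ico _ _).union (finite_Ico _ _)).ncInvolutions.subset
      fun σ hσ => hσ.1) hV, Finset.sum_union (by grind [Finset.disjoint_left]),
    Finset.sum_Ico_eq_sum_range, Finset.sum_Ico_eq_sum_range, Nat.add_sub_cancel_left,
    show a + (k + 1) + n - (a + n) = k + 1 by omega]

theorem ncard_symNCInvolutions (a k n : ℕ) (hkn : a + k ≤ n) :
    (symNCInvolutions a (a + k) n).ncard = Ms k := by
  induction k using Nat.strong_induction_on generalizing a with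
  | _ k ih =>
  cases k with
  | zero => simp [symNCInvolutions_self, Ms]
  | succ k =>
    have ncard_fiber_self :
        {σ ∈ symNCInvolutions a (a + (k + 1)) n | σ a = a + 0}.ncard = Ms k := by
      rw [add_zero, symNCInvolutions_fiber_self (by omega) hkn, ← ih k (by omega) (a + 1)]
      · ring_nf
      · omega
    have ncard_fiber_low : ∀ i < k,
        {σ ∈ symNCInvolutions a (a + (k + 1)) n | σ a = a + (i + 1)}.ncard =
          motzkin i * Ms (k - 1 - i) := by
      intro i hi
      rw [ncard_symNCInvolutions_fiber_low (by omega) (by omega) hkn,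
        show a + (k + 1) = a + (i + 1) + 1 + (k - 1 - i) by omega, ih (k - 1 - i) (by omega)
          _ (by omega), show a + (i + 1) = a + 1 + i by ring, ncard_ncInvolutions_Ico]
    have ncard_fiber_diameter :
        {σ ∈ symNCInvolutions a (a + (k + 1)) n | σ a = a + n + 0}.ncard = motzkin k := by
      rw [add_zero, ncard_symNCInvolutions_fiber_diameter (by omega) hkn,
        show a + (k + 1) = a + 1 + k by ring, ncard_ncInvolutions_Ico]
    have ncard_fiber_high : ∀ i < k,
        {σ ∈ symNCInvolutions a (a + (k + 1)) n | σ a = a + n + (i + 1)}.ncard =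
          Ms i * motzkin (k - 1 - i) := by
      intro i hi
      rw [show a + n + (i + 1) = a + (i + 1) + n by ring,
        ncard_symNCInvolutions_fiber_high (by omega) (by omega) hkn,
        show a + (k + 1) = a + (i + 1) + 1 + (k - 1 - i) by omega, ncard_ncInvolutions_Ico,
        show a + (i + 1) = a + 1 + i by ring, ih i (by omega) _ (by omega)]
    rw [ncard_symNCInvolutions_eq_sum_fibers hkn, Finset.sum_range_succ', Finset.sum_range_succ',
      Finset.sum_congr rfl fun i hi => ncard_fiber_low i (Finset.mem_range.1 hi),
      Finset.sum_congr rfl fun i hi => ncard_fiber_high i (Finset.mem_range.1 hi),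
      ncard_fiber_self, ncard_fiber_diameter, sum_range_Ms_mul_motzkin, Ms_succ]
    ring

/-! ### Transfer to `ZMod (2n)` -/

section ZModBridge

variable {n : ℕ}

def toNatFun (n : ℕ) (σ : ZMod (2 * n) → ZMod (2 * n)) (x : ℕ) : ℕ :=
  if x < 2 * n then (σ x).val else x

theorem toNatFun_of_le (σ : ZMod (2 * n) → ZMod (2 * n)) {x : ℕ} (hx : 2 * n ≤ x) :
    toNatFun n σ x = x := if_neg (not_lt.2 hx)

theorem ZMod.exists_val_eq_of_lt {m x : ℕ} (hx : x < m) : ∃ i : ZMod m, i.val = x :=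
  ⟨x, ZMod.val_natCast_of_lt hx⟩

variable [NeZero n]

theorem ZMod.val_add_half (i : ZMod (2 * n)) : (i + n).val = halfTurn n i.val := by
  have hi := i.val_lt
  rw [ZMod.val_add, ZMod.val_natCast_of_lt (by omega : n < 2 * n), halfTurn]
  split_ifs with h
  · exact Nat.mod_eq_of_lt (by omega)
  · rw [Nat.mod_eq_sub_mod (by omega), Nat.mod_eq_of_lt (by omega)]; omega

theorem toNatFun_val (σ : ZMod (2 * n) → ZMod (2 * n)) (i : ZMod (2 * n)) :
    toNatFun n σ i.val = (σ i).val := by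
  simp [toNatFun, i.val_lt]

theorem isSymTwoBrauer_iff (σ : ZMod (2 * n) → ZMod (2 * n)) :
    IsSymTwoBrauer n σ ↔ toNatFun n σ ∈ symNCInvolutions 0 n n := by
  have hval := toNatFun_val σ
  have hfix : ∀ {x}, 2 * n ≤ x → toNatFun n σ x = x := toNatFun_of_le σ
  have hinj := ZMod.val_injective (2 * n)
  constructor
  · rintro ⟨hσ, hnc, hsym⟩
    refine ⟨⟨fun x => ?_, fun x hx => hfix (by simp only [mem_union, mem_Ico] at hx; omega), ?_⟩,
      fun x => ?_⟩
    · rcases lt_or_ge x (2 * n) with hx | hx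
      · obtain ⟨i, rfl⟩ := ZMod.exists_val_eq_of_lt hx
        rw [hval, hval, hσ]
      · rw [hfix hx, hfix hx]
    · rintro ⟨x, y, hxy, hy, hyx⟩
      rcases lt_or_ge x (2 * n) with hx | hx
      swap; · rw [hfix hx] at hy; omega
      obtain ⟨i, rfl⟩ := ZMod.exists_val_eq_of_lt hx
      rw [hval] at hy hyx
      rcases lt_or_ge y (2 * n) with hy' | hy'
      swap; · rw [hfix hy'] at hyx; omega
      obtain ⟨j, rfl⟩ := ZMod.exists_val_eq_of_lt hy'
      rw [hval] at hyx
      exact hnc ⟨i, j, hxy, hy, hyx⟩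
    · rcases lt_or_ge x (2 * n) with hx | hx
      · obtain ⟨i, rfl⟩ := ZMod.exists_val_eq_of_lt hx
        rw [← ZMod.val_add_half, hval, hval, hsym, ZMod.val_add_half]
      · rw [halfTurn_of_le hx, hfix hx, halfTurn_of_le hx]
  · rintro ⟨hτ, hτρ⟩
    refine ⟨fun i => hinj ?_, fun ⟨i, j, hij, hj, hji⟩ => ?_, fun i => hinj ?_⟩
    · rw [← hval, ← hval, hτ.involutive]
    · exact hτ.noncrossing ⟨i.val, j.val, hij, by rwa [hval], by rwa [hval, hval]⟩
    · rw [← hval, ZMod.val_add_half, hτρ, hval, ZMod.val_add_half]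

theorem ncard_isSymTwoBrauer :
    {σ | IsSymTwoBrauer n σ}.ncard = (symNCInvolutions 0 n n).ncard := by
  refine BijOn.ncard_eq (f := toNatFun n) ⟨fun σ hσ => (isSymTwoBrauer_iff σ).1 hσ,
    fun σ _ σ' _ h => funext fun i => ZMod.val_injective _ ?_, fun τ hτ => ?_⟩
  · rw [← toNatFun_val, h, toNatFun_val]
  · have hτlt : ∀ x < 2 * n, τ x < 2 * n := fun x hx => by
      have := hτ.1.mapsTo (show x ∈ Ico 0 n ∪ Ico (0 + n) (n + n) by grind)
      grind
    have hστ : toNatFun n (fun i => (τ i.val : ZMod (2 * n))) = τ := by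
      funext x
      rcases lt_or_ge x (2 * n) with hx | hx
      · obtain ⟨i, rfl⟩ := ZMod.exists_val_eq_of_lt hx
        rw [toNatFun_val, ZMod.val_natCast_of_lt (hτlt _ hx)]
      · rw [toNatFun_of_le _ hx, hτ.1.eq_self_of_notMem x (by grind)]
    exact ⟨_, (isSymTwoBrauer_iff _).2 (hστ.symm ▸ hτ), hστ⟩

end ZModBridge

theorem card_symTwoBrauer_eq_Ms (n : ℕ) (hn : 1 ≤ n) :
    {σ : ZMod (2 * n) → ZMod (2 * n) | IsSymTwoBrauer n σ}.Finite ∧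
      {σ : ZMod (2 * n) → ZMod (2 * n) | IsSymTwoBrauer n σ}.ncard = Ms n := by
  have : NeZero n := ⟨by omega⟩
  have h := ncard_symNCInvolutions 0 n n (by simp)
  rw [zero_add] at h
  exact ⟨toFinite _, ncard_isSymTwoBrauer.trans h⟩
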